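/- arXiv:2209.01085 — 3 statements merged into one kernel-verified Lean document; each statement's English description precedes it below -/
import Mathlib

section
/- The lex category freely generated by a single object is equivalent to the opposite of the category of finite sets. -/
/-!
Let `e : (O ⥤ₗ Type u) ≌ Type u` and let `F : Oᵒᵖ ⥤ Type u` be `e` composed with the coyoneda
embedding `X ↦ Hom(X, -)`, which is fully faithful. Filtered colimits of lex functors are computed
pointwise, so representables are finitely presentable and `F` takes finite values; by the Yoneda
lemma `F` turns finite limits of `O` into finite colimits. Some `F X` is nonempty, and a constant
idempotent of `F X` splits in `O`, giving `R` with `F R` a singleton. Then every finite set `A` is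
`F (∏_A R)`, so `F` is an equivalence onto finite sets.
-/

open CategoryTheory Limits Opposite

universe v u

namespace CategoryTheory

lemma isIdempotentComplete_of_hasEqualizers (C : Type*) [Category* C] [HasEqualizers C] :
    IsIdempotentComplete C := by
  rw [Idempotents.isIdempotentComplete_iff_hasEqualizer_of_id_and_idempotent]
  intros
  infer_instance

namespace Functor

variable {D : Type*} [Category* D] (F : D ⥤ Type v)

lemma exists_nonempty_unique_obj [IsIdempotentComplete D] [F.Full] [F.Faithful] {X : D}
    (x : F.obj X) : ∃ R : D, Nonempty (Unique (F.obj R)) := by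
  let c : F.obj X ⟶ F.obj X := TypeCat.ofHom fun _ => x
  obtain ⟨R, i, q, hiq, hqi⟩ := IsIdempotentComplete.idempotents_split X (F.preimage c)
    (F.map_injective (by ext; simp [c]))
  have hiq' (y : F.obj R) : F.map q (F.map i y) = y := by
    simpa using ConcreteCategory.congr_hom (F.congr_map hiq) y
  have hqi' (z : F.obj X) : F.map i (F.map q z) = x := by
    simpa [c] using ConcreteCategory.congr_hom (F.congr_map hqi) z
  refine ⟨R, ⟨{ default := F.map q x, uniq := fun y => ?_ }⟩⟩
  have hy : F.map i y = x := by simpa only [hiq'] using hqi' (F.map i y)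
  exact (hiq' y).symm.trans (congrArg (F.map q) hy)

noncomputable def objSigmaConstEquiv [HasFiniteCoproducts D] [PreservesFiniteCoproducts F]
    (R : D) [Unique (F.obj R)] (A : Type v) [Finite A] : F.obj (∐ fun _ : A => R) ≃ A :=
  (PreservesCoproduct.iso F _ ≪≫ Types.coproductIso _).toEquiv.trans (Equiv.sigmaUnique A _)

def toFintypeCat (hF : ∀ X, Finite (F.obj X)) : D ⥤ FintypeCat.{v} :=
  ObjectProperty.lift _ F hF

lemma isEquivalence_toFintypeCat [IsIdempotentComplete D] [HasFiniteCoproducts D]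
    [F.Full] [F.Faithful] [PreservesFiniteCoproducts F] (hF : ∀ X, Finite (F.obj X)) {X : D}
    (x : F.obj X) : (F.toFintypeCat hF).IsEquivalence := by
  obtain ⟨R, ⟨_⟩⟩ := F.exists_nonempty_unique_obj x
  have : (F.toFintypeCat hF).Full := ObjectProperty.instFullFullSubcategoryLift _ _ _
  have : (F.toFintypeCat hF).Faithful := ObjectProperty.instFaithfulFullSubcategoryLift _ _ _
  have : (F.toFintypeCat hF).EssSurj :=
    ⟨fun A => ⟨_, ⟨FintypeCat.equivEquivIso (F.objSigmaConstEquiv R A)⟩⟩⟩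
  exact {}

end Functor

namespace LeftExactFunctor

variable {C : Type u} [Category.{v} C]

def coyoneda : Cᵒᵖ ⥤ (C ⥤ₗ Type v) :=
  (leftExactFunctor C (Type v)).lift CategoryTheory.coyoneda fun X =>
    (inferInstance : PreservesFiniteLimits (CategoryTheory.coyoneda.obj X))

instance : (coyoneda (C := C)).Full := ObjectProperty.instFullFullSubcategoryLift _ _ _

instance : (coyoneda (C := C)).Faithful := ObjectProperty.instFaithfulFullSubcategoryLift _ _ _

def coyonedaEquiv {X : C} {G : C ⥤ₗ Type v} : (coyoneda.obj (op X) ⟶ G) ≃ G.obj.obj X :=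
  InducedCategory.homEquiv.trans CategoryTheory.coyonedaEquiv

def coyonedaObjIso (X : C) :
    CategoryTheory.coyoneda.obj (op (coyoneda.obj (op X))) ≅
      forget C (Type v) ⋙ (evaluation C (Type v)).obj X ⋙ uliftFunctor.{u} :=
  NatIso.ofComponents (fun G => (coyonedaEquiv.trans Equiv.ulift.symm).toIso) fun β => by
    ext α
    exact congrArg ULift.up (coyonedaEquiv_comp α.hom β.hom)

def coyonedaRightOpCompYonedaObjIso (G : C ⥤ₗ Type v) :
    coyoneda.rightOp ⋙ yoneda.obj G ≅ G.obj ⋙ uliftFunctor.{u} :=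
  NatIso.ofComponents (fun X => (coyonedaEquiv.trans Equiv.ulift.symm).toIso) fun f => by
    ext α
    exact congrArg ULift.up (coyonedaEquiv_naturality α.hom f).symm

instance : PreservesFiniteLimits (coyoneda (C := C)).rightOp where
  preservesFiniteLimits _ _ _ := ⟨fun {_} => ⟨fun {_} hc =>
    ⟨yonedaJointlyReflectsLimits _ _ fun G => by
      have := G.property
      have := preservesFiniteLimits_of_natIso (coyonedaRightOpCompYonedaObjIso G).symm
      exact isLimitOfPreserves (coyoneda.rightOp ⋙ yoneda.obj G) hc⟩⟩⟩

instance : PreservesFiniteColimits (coyoneda (C := C)) :=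
  preservesFiniteColimits_of_rightOp _

-- Filtered colimits commute with finite limits in `Type v`.
instance (J : Type v) [SmallCategory J] [IsFiltered J] :
    (leftExactFunctor C (Type v)).IsClosedUnderColimitsOfShape J :=
  inferInstanceAs (ObjectProperty.preservesFiniteLimits.IsClosedUnderColimitsOfShape J)

instance isFinitelyPresentable_coyoneda_obj (X : Cᵒᵖ) :
    IsFinitelyPresentable.{v} (coyoneda.obj X) := by
  rw [isFinitelyPresentable_iff_preservesFilteredColimitsOfSize]
  exact ⟨fun J _ _ => preservesColimitsOfShape_of_natIso (J := J) (coyonedaObjIso X.unop).symm⟩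

section

attribute [local instance] Cardinal.fact_isRegular_aleph0

variable (e : (C ⥤ₗ Type v) ≌ Type v)

lemma finite_functor_obj_coyoneda_obj (X : Cᵒᵖ) : Finite (e.functor.obj (coyoneda.obj X)) := by
  have := isCardinalPresentable_of_equivalence (coyoneda.obj X) Cardinal.aleph0 e
  rwa [Types.isCardinalPresentable_iff, hasCardinalLT_aleph0_iff] at this

lemma exists_nonempty_functor_obj_coyoneda_obj :
    ∃ X : Cᵒᵖ, Nonempty (e.functor.obj (coyoneda.obj X)) := by
  by_contra! h
  -- Otherwise all representables are initial, so every lex functor is pointwise a singleton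
  -- and `e.inverse.obj PEmpty` receives a map from `e.inverse.obj PUnit`.
  have (G : C ⥤ₗ Type v) (X : C) : Unique (G.obj.obj X) :=
    (coyonedaEquiv.symm.trans (e.fullyFaithfulFunctor.homEquiv.trans TypeCat.homEquiv)).unique
  let f : e.inverse.obj PUnit ⟶ e.inverse.obj PEmpty := ObjectProperty.homMk
    { app _ := TypeCat.ofHom fun _ => default
      naturality _ _ _ := by ext; exact Subsingleton.elim _ _ }
  exact ((e.counitIso.inv.app _ ≫ e.functor.map f ≫ e.counitIso.hom.app _) PUnit.unit).elim

end

end LeftExactFunctor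

end CategoryTheory

/-- The lex category freely generated by a single object — i.e. a lex
category `O` such that for every lex category `E`, lex functors `O ⥤ E` correspond
(as categories) to objects of `E` — is equivalent to the opposite of the category of
finite sets. -/
theorem free_lex_on_one_object_is_opposite_finite_sets
    (O : Type (u + 1)) [Category.{u} O] [HasFiniteLimits O]
    (hfree : ∀ (E : Type (u + 1)) [Category.{u} E] [HasFiniteLimits E],
      Nonempty ((ObjectProperty.FullSubcategory fun H : O ⥤ E => Nonempty (PreservesFiniteLimits H)) ≌ E)) :
    Nonempty (O ≌ FintypeCat.{u}ᵒᵖ) := by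
  obtain ⟨e⟩ := hfree (Type u)
  let e' : (O ⥤ₗ Type u) ≌ Type u :=
    ((CategoryTheory.Equivalence.refl (C := O ⥤ Type u)).congrFullSubcategory
      (Q := leftExactFunctor O (Type u)) (by ext; simp)).symm.trans e
  have := isIdempotentComplete_of_hasEqualizers O
  obtain ⟨X, ⟨x⟩⟩ := LeftExactFunctor.exists_nonempty_functor_obj_coyoneda_obj e'
  let F := LeftExactFunctor.coyoneda ⋙ e'.functor
  have := F.isEquivalence_toFintypeCat (LeftExactFunctor.finite_functor_obj_coyoneda_obj e') x
  exact ⟨(F.toFintypeCat _).asEquivalence.rightOp⟩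
end

section
/- In a clan, given a map of spans where the left square is Reedy fibrant, i.e. a diagram a ↠ b ← c over a' ↠ b' ← c' with vertical fibrations a ↠ a', c ↠ c' and the induced map a → a' ×_{b'} b a fibration, the induced map on pullbacks a ×_b c → a' ×_{b'} c' is a fibration. -/
open CategoryTheory Limits

universe v u

/-- A clan structure on a category `C`: a terminal object together with a class of
"fibrations" closed under isomorphism, composition and pullback, containing all maps to the
terminal object, and such that pullbacks of fibrations exist. -/
structure Clan (C : Type u) [Category.{v} C] where
  /-- the class of fibrations -/
  Fib : ∀ ⦃a b : C⦄, (a ⟶ b) → Prop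
  /-- the terminal object -/
  T : C
  isTerminalT : IsTerminal T
  fib_toT : ∀ ⦃a : C⦄ (f : a ⟶ T), Fib f
  fib_iso : ∀ ⦃a b a' b' : C⦄ (f : a ⟶ b) (f' : a' ⟶ b'),
    (Arrow.mk f ≅ Arrow.mk f') → Fib f → Fib f'
  fib_comp : ∀ ⦃a b c : C⦄ (f : a ⟶ b) (g : b ⟶ c), Fib f → Fib g → Fib (f ≫ g)
  fib_pb_exists : ∀ ⦃a b c : C⦄ (g : a ⟶ b) (f : c ⟶ b), Fib f →
    ∃ (d : C) (p : d ⟶ a) (q : d ⟶ c), IsPullback p q g f ∧ Fib p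
  fib_pb_stable : ∀ ⦃d a b c : C⦄ (p : d ⟶ a) (q : d ⟶ c) (g : a ⟶ b) (f : c ⟶ b),
    IsPullback p q g f → Fib f → Fib p

/-- In the pullback `P = a ×_b c`, a factorisation `f = gap ≫ e₂` through `E` exhibits the
comparison map `P ⟶ c ×_b E` as a pullback of `gap`. -/
theorem CategoryTheory.IsPullback.of_factor_fst {C : Type u} [Category.{v} C]
    {P Q a b c E : C} {p : P ⟶ a} {q : P ⟶ c} {f : a ⟶ b} {g : c ⟶ b}
    {gap : a ⟶ E} {e₂ : E ⟶ b} {rc : Q ⟶ c} {rE : Q ⟶ E} {k : P ⟶ Q}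
    (hP : IsPullback p q f g) (hf : gap ≫ e₂ = f) (hQ : IsPullback rc rE g e₂)
    (hk₁ : k ≫ rc = q) (hk₂ : k ≫ rE = p ≫ gap) :
    IsPullback p k gap rE := by
  subst hf hk₁
  exact IsPullback.of_bot (by simpa using hP) hk₂.symm hQ.flip

/-- Pasting `c ×_b E` with `E = a' ×_{b'} b` gives `c ×_{b'} a'`, so the comparison map
`c ×_b E ⟶ a' ×_{b'} c'` is a pullback of `vc : c ⟶ c'`. -/
theorem CategoryTheory.IsPullback.of_paste_span {C : Type u} [Category.{v} C]
    {Q P' a' b b' c c' E : C} {rc : Q ⟶ c} {rE : Q ⟶ E} {g : c ⟶ b} {e₂ : E ⟶ b}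
    {e₁ : E ⟶ a'} {f' : a' ⟶ b'} {vb : b ⟶ b'} {p' : P' ⟶ a'} {q' : P' ⟶ c'}
    {g' : c' ⟶ b'} {vc : c ⟶ c'} {m : Q ⟶ P'}
    (hQ : IsPullback rc rE g e₂) (hE : IsPullback e₁ e₂ f' vb) (hP' : IsPullback p' q' f' g')
    (sq : vc ≫ g' = g ≫ vb) (hm₁ : m ≫ p' = rE ≫ e₁) (hm₂ : m ≫ q' = rc ≫ vc) :
    IsPullback m rc q' vc := by
  have hbig : IsPullback (m ≫ p') rc f' (vc ≫ g') := by
    rw [hm₁, sq]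
    exact hQ.flip.paste_horiz hE
  exact IsPullback.of_right hbig hm₂ hP'

namespace Clan

variable {C : Type u} [Category.{v} C] (S : Clan C)

theorem fib_snd_of_isPullback {d a b c : C} {p : d ⟶ a} {q : d ⟶ c} {g : a ⟶ b}
    {f : c ⟶ b} (hpb : IsPullback p q g f) (hg : S.Fib g) : S.Fib q :=
  S.fib_pb_stable q p f g hpb.flip hg

end Clan

theorem reedy_fibrant_map_of_spans_induces_fibration_on_pullbacks_general
    {C : Type u} [Category.{v} C] (S : Clan C)
    {a b c a' b' c' : C}
    (f : a ⟶ b) (g : c ⟶ b) (f' : a' ⟶ b') (g' : c' ⟶ b')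
    (va : a ⟶ a') (vb : b ⟶ b') (vc : c ⟶ c')
    (hf' : S.Fib f') (hvc : S.Fib vc)
    (sq2 : vc ≫ g' = g ≫ vb)
    -- the pullback `a ×_b c`
    {P : C} (p : P ⟶ a) (q : P ⟶ c) (hP : IsPullback p q f g)
    -- the pullback `a' ×_{b'} c'`
    {P' : C} (p' : P' ⟶ a') (q' : P' ⟶ c') (hP' : IsPullback p' q' f' g')
    -- the pullback `a' ×_{b'} b` and the Reedy gap map
    {E : C} (e₁ : E ⟶ a') (e₂ : E ⟶ b) (hE : IsPullback e₁ e₂ f' vb)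
    (gap : a ⟶ E) (hgap₁ : gap ≫ e₁ = va) (hgap₂ : gap ≫ e₂ = f)
    (hReedy : S.Fib gap)
    -- the induced map on pullbacks
    (h : P ⟶ P') (hh₁ : h ≫ p' = p ≫ va) (hh₂ : h ≫ q' = q ≫ vc) :
    S.Fib h := by
  -- `h` factors through `Q = c ×_b E` as a pullback of `gap` followed by a pullback of `vc`
  obtain ⟨Q, rc, rE, hQ, -⟩ := S.fib_pb_exists g e₂ (S.fib_snd_of_isPullback hE hf')
  let k : P ⟶ Q := hQ.lift q (p ≫ gap) (by rw [Category.assoc, hgap₂, hP.w])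
  let m : Q ⟶ P' := hP'.lift (rE ≫ e₁) (rc ≫ vc) (by
    rw [Category.assoc, hE.w, ← Category.assoc, ← hQ.w, Category.assoc, Category.assoc, sq2])
  have hk : S.Fib k := S.fib_snd_of_isPullback
    (hP.of_factor_fst hgap₂ hQ (hQ.lift_fst _ _ _) (hQ.lift_snd _ _ _)) hReedy
  have hm : S.Fib m := S.fib_pb_stable m rc q' vc
    (hQ.of_paste_span hE hP' sq2 (hP'.lift_fst _ _ _) (hP'.lift_snd _ _ _)) hvc
  have hkm : h = k ≫ m := hP'.hom_ext
    (by simp [k, m, hh₁, ← hgap₁]) (by simp [k, m, hh₂])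
  exact hkm ▸ S.fib_comp k m hk hm

/-- In a clan, given a map of spans `(a ↠ b ← c) → (a' ↠ b' ← c')` with
vertical fibrations `a ↠ a'`, `c ↠ c'` whose left square is Reedy fibrant (the gap map
`a → a' ×_{b'} b` is a fibration), the induced map on pullbacks `a ×_b c → a' ×_{b'} c'` is a
fibration. -/
theorem reedy_fibrant_map_of_spans_induces_fibration_on_pullbacks
    {C : Type u} [Category.{v} C] (S : Clan C)
    {a b c a' b' c' : C}
    (f : a ⟶ b) (g : c ⟶ b) (f' : a' ⟶ b') (g' : c' ⟶ b')
    (va : a ⟶ a') (vb : b ⟶ b') (vc : c ⟶ c')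
    (hf : S.Fib f) (hf' : S.Fib f') (hva : S.Fib va) (hvc : S.Fib vc)
    (sq1 : va ≫ f' = f ≫ vb) (sq2 : vc ≫ g' = g ≫ vb)
    -- the pullback `a ×_b c`
    {P : C} (p : P ⟶ a) (q : P ⟶ c) (hP : IsPullback p q f g)
    -- the pullback `a' ×_{b'} c'`
    {P' : C} (p' : P' ⟶ a') (q' : P' ⟶ c') (hP' : IsPullback p' q' f' g')
    -- the pullback `a' ×_{b'} b` and the Reedy gap map
    {E : C} (e₁ : E ⟶ a') (e₂ : E ⟶ b) (hE : IsPullback e₁ e₂ f' vb)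
    (gap : a ⟶ E) (hgap₁ : gap ≫ e₁ = va) (hgap₂ : gap ≫ e₂ = f)
    (hReedy : S.Fib gap)
    -- the induced map on pullbacks
    (h : P ⟶ P') (hh₁ : h ≫ p' = p ≫ va) (hh₂ : h ≫ q' = q ≫ vc) :
    S.Fib h :=
  reedy_fibrant_map_of_spans_induces_fibration_on_pullbacks_general S f g f' g' va vb vc hf' hvc sq2
    p q hP p' q' hP' e₁ e₂ hE gap hgap₁ hgap₂ hReedy h hh₁ hh₂
end

section
/- For clans C and D, the category C ⊸ D whose objects are clan morphisms C → D, whose morphisms are natural transformations, with limits computed pointwise, and where α : F → G is a fibration iff for every fibration c ↠ c' in C the gap map F(c) → F(c') ×_{G(c')} G(c) is a fibration in D, is itself a clan; moreover every fibration in C ⊸ D is a pointwise fibration. -/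
open CategoryTheory Limits

universe v u

variable {C : Type u} [Category.{v} C] {D : Type u} [Category.{v} D]

/-- A clan morphism: a functor preserving the terminal object, fibrations, and pullbacks of
fibrations. -/
def IsClanMor (S : Clan C) (S' : Clan D) (F : C ⥤ D) : Prop :=
  (∀ ⦃a b : C⦄ (f : a ⟶ b), S.Fib f → S'.Fib (F.map f)) ∧
  Nonempty (IsTerminal (F.obj S.T)) ∧
  (∀ ⦃d a b c : C⦄ (p : d ⟶ a) (q : d ⟶ c) (g : a ⟶ b) (f : c ⟶ b),
    IsPullback p q g f → S.Fib f →
      IsPullback (F.map p) (F.map q) (F.map g) (F.map f))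

/-- The category `C ⊸ D` of clan morphisms, with natural transformations as morphisms. -/
abbrev ClanMorCat (S : Clan C) (S' : Clan D) := ObjectProperty.FullSubcategory (IsClanMor S S')

/-- The fibration condition on a natural transformation `α : F ⟶ G` between clan morphisms:
for every fibration `c ↠ c'` in `C`, the gap map `F(c) ⟶ F(c') ×_{G(c')} G(c)` is a fibration
in `D`. -/
def GapFib (S : Clan C) (S' : Clan D) {A B : ClanMorCat S S'} (α : A ⟶ B) : Prop :=
  ∀ ⦃c c' : C⦄ (f : c ⟶ c'), S.Fib f →
    ∀ ⦃P : D⦄ (p : P ⟶ A.obj.obj c') (q : P ⟶ B.obj.obj c),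
      IsPullback p q (α.hom.app c') (B.obj.map f) →
        ∀ h : A.obj.obj c ⟶ P, h ≫ p = A.obj.map f →
          h ≫ q = α.hom.app c → S'.Fib h

/-!
The fibration condition on `α` at a fibration `f` only concerns one commutative square in `D`,
the naturality square of `α` at `f`: its gap map has to be a fibration. This property of squares
is stable under vertical pasting along fibrations and under base change, and it holds for squares
with invertible vertical edges or invertible bottom edge. Applied to `c ⟶ 1`, it shows that a gap
fibration is a pointwise fibration, so pullbacks along it exist pointwise; since pullbacks commute
with pullbacks, the pointwise pullback is again a clan morphism, and base change shows that its
projection is a gap fibration. Closure under isomorphisms follows from closure under composition,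
as isomorphisms are gap fibrations.
-/

namespace Clan

variable {K : Type*} [Category* K] (S : Clan K)

theorem fib_of_isIso {a b : K} (f : a ⟶ b) [IsIso f] : S.Fib f :=
  S.fib_pb_stable f (S.isTerminalT.from a) (S.isTerminalT.from b) (𝟙 S.T)
    (.of_horiz_isIso ⟨S.isTerminalT.hom_ext _ _⟩) (S.fib_toT _)

theorem hasPullback {a b c : K} (g : a ⟶ b) {f : c ⟶ b} (hf : S.Fib f) : HasPullback g f :=
  let ⟨_, _, _, h, _⟩ := S.fib_pb_exists g f hf
  h.hasPullback

/-- The gap map `X ⟶ X' ×_{Y'} Y` of the square with top `t`, left `l`, right `r` and bottom `b`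
is a fibration, for every choice of the pullback. -/
def IsGapFib {X X' Y Y' : K} (t : X ⟶ X') (l : X ⟶ Y) (r : X' ⟶ Y') (b : Y ⟶ Y') : Prop :=
  ∀ ⦃P : K⦄ (p : P ⟶ X') (q : P ⟶ Y), IsPullback p q r b →
    ∀ h : X ⟶ P, h ≫ p = t → h ≫ q = l → S.Fib h

variable {S}

section Square

variable {X X' Y Y' : K} {t : X ⟶ X'} {l : X ⟶ Y} {r : X' ⟶ Y'} {b : Y ⟶ Y'}

theorem IsGapFib.of_isPullback {P : K} {p : P ⟶ X'} {q : P ⟶ Y} (hP : IsPullback p q r b)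
    {h : X ⟶ P} (hp : h ≫ p = t) (hq : h ≫ q = l) (hh : S.Fib h) : S.IsGapFib t l r b := by
  intro P' p' q' hP' h' hp' hq'
  have hh' : h' = h ≫ (hP.isoIsPullback _ _ hP').hom :=
    hP'.hom_ext (by simp [hp, hp']) (by simp [hq, hq'])
  exact S.fib_iso h h' (Arrow.isoMk (Iso.refl _) (hP.isoIsPullback _ _ hP') (by simp [hh'])) hh

theorem IsGapFib.flip (hg : S.IsGapFib t l r b) : S.IsGapFib l t b r :=
  fun _ _ _ hP h hp hq => hg _ _ hP.flip h hq hp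

theorem IsGapFib.fib_left (hg : S.IsGapFib t l r b) (w : t ≫ r = l ≫ b) (hr : S.Fib r) :
    S.Fib l := by
  obtain ⟨P, q, p, hP, hq⟩ := S.fib_pb_exists b r hr
  rw [← hP.flip.lift_snd t l w]
  exact S.fib_comp _ _ (hg p q hP.flip _ (by simp) (by simp)) hq

theorem IsGapFib.fib_top (hg : S.IsGapFib t l r b) (w : t ≫ r = l ≫ b) (hb : S.Fib b) :
    S.Fib t :=
  hg.flip.fib_left w.symm hb

theorem isGapFib_of_isIso [IsIso l] [IsIso r] : S.IsGapFib t l r b := by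
  intro P p q hP h _ hq
  have := hP.isIso_snd_of_isIso
  rw [show h = l ≫ inv q by simp [← hq]]
  exact S.fib_of_isIso _

theorem isGapFib_of_isIso_bottom [IsIso b] (ht : S.Fib t) : S.IsGapFib t l r b := by
  intro P p q hP h hp _
  have := hP.isIso_fst_of_isIso
  rw [show h = t ≫ inv p by simp [← hp]]
  exact S.fib_comp _ _ ht (S.fib_of_isIso _)

theorem IsGapFib.comp {Z Z' : K} {l' : Y ⟶ Z} {r' : Y' ⟶ Z'} {n : Z ⟶ Z'}
    (h₁ : S.IsGapFib t l r b) (h₂ : S.IsGapFib b l' r' n) (w₁ : t ≫ r = l ≫ b)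
    (w₂ : b ≫ r' = l' ≫ n) (hb : S.Fib b) (hn : S.Fib n) :
    S.IsGapFib t (l ≫ l') (r ≫ r') n := by
  obtain ⟨Q, q₁, q₂, hQ, hq₁⟩ := S.fib_pb_exists r' n hn
  obtain ⟨R, s₁, s₂, hR, -⟩ := S.fib_pb_exists r q₁ hq₁
  obtain ⟨Q', s₁', s₂', hQ', -⟩ := S.fib_pb_exists r b hb
  set k := hQ.lift b l' w₂
  have hk : S.Fib k := h₂ q₁ q₂ hQ k (by simp [k]) (by simp [k])
  set g := hQ'.lift t l w₁
  have hg : S.Fib g := h₁ s₁' s₂' hQ' g (by simp [g]) (by simp [g])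
  set χ := hR.lift s₁' (s₂' ≫ k) (by simp [k, hQ'.w])
  have hχ : IsPullback χ s₂' s₂ k :=
    .of_right (by simpa [χ, k] using hQ') (by simp [χ]) hR
  refine .of_isPullback (hR.paste_vert hQ) (h := g ≫ χ) (by simp [χ, g]) (by simp [χ, g, k])
    (S.fib_comp _ _ hg (S.fib_pb_stable _ _ _ _ hχ hk))

end Square

theorem IsGapFib.baseChange {A A' B B' E E' W W' : K} {a : A ⟶ A'} {b : B ⟶ B'} {e : E ⟶ E'}
    {w : W ⟶ W'} {γ : A ⟶ B} {γ' : A' ⟶ B'} {β : E ⟶ B} {β' : E' ⟶ B'} {w₁ : W ⟶ A}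
    {w₂ : W ⟶ E} {w₁' : W' ⟶ A'} {w₂' : W' ⟶ E'}
    (hβ : S.IsGapFib e β β' b) (hb : S.Fib b) (hW : IsPullback w₁ w₂ γ β)
    (hW' : IsPullback w₁' w₂' γ' β') (hγ : a ≫ γ' = γ ≫ b) (he : e ≫ β' = β ≫ b)
    (hw₂ : w ≫ w₂' = w₂ ≫ e) :
    S.IsGapFib w w₁ w₁' a := by
  intro P p q hP h hp hq
  obtain ⟨Q, q₁, q₂, hQ, -⟩ := S.fib_pb_exists β' b hb
  set k := hQ.lift e β he
  have hk : S.Fib k := hβ q₁ q₂ hQ k (by simp [k]) (by simp [k])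
  set m := hQ.lift (p ≫ w₂') (q ≫ γ) (by simp only [Category.assoc, ← hW'.w, hP.w_assoc, hγ])
  have hm : IsPullback q m γ q₂ :=
    .of_bot (by simpa [m, hγ] using hP.flip.paste_vert hW') (by simp [m]) hQ.flip
  have hh : IsPullback h w₂ m k := by
    refine .of_right (by simpa [hq, k] using hW) (hQ.hom_ext ?_ ?_) hm
    · simp [m, k, reassoc_of% hp, hw₂]
    · simp [m, k, reassoc_of% hq, hW.w]
  exact S.fib_pb_stable _ _ _ _ hh hk

end Clan

section PointwisePullback

variable {𝒜 ℬ : Type*} [Category* 𝒜] [Category* ℬ] {A B E W : 𝒜 ⥤ ℬ} {γ : A ⟶ B}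
  {β : E ⟶ B} {w₁ : W ⟶ A} {w₂ : W ⟶ E}

theorem isPullback_map_of_isPullback_app
    (hW : ∀ x, IsPullback (w₁.app x) (w₂.app x) (γ.app x) (β.app x))
    {d a b c : 𝒜} {p : d ⟶ a} {q : d ⟶ c} {g : a ⟶ b} {f : c ⟶ b} (hpq : p ≫ g = q ≫ f)
    (hA : IsPullback (A.map p) (A.map q) (A.map g) (A.map f))
    (hB : IsPullback (B.map p) (B.map q) (B.map g) (B.map f))
    (hE : IsPullback (E.map p) (E.map q) (E.map g) (E.map f)) :
    IsPullback (W.map p) (W.map q) (W.map g) (W.map f) := by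
  refine .of_isLimit' ⟨by simp only [← W.map_comp, hpq]⟩ (PullbackCone.IsLimit.mk _
    (fun s => (hW d).lift
      (hA.lift (s.fst ≫ w₁.app a) (s.snd ≫ w₁.app c)
        (by simp only [Category.assoc, ← w₁.naturality, s.condition_assoc]))
      (hE.lift (s.fst ≫ w₂.app a) (s.snd ≫ w₂.app c)
        (by simp only [Category.assoc, ← w₂.naturality, s.condition_assoc]))
      (hB.hom_ext ?_ ?_)) ?_ ?_ ?_)
  · simp only [Category.assoc, ← γ.naturality, ← β.naturality, hA.lift_fst_assoc,
      hE.lift_fst_assoc, (hW a).w]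
  · simp only [Category.assoc, ← γ.naturality, ← β.naturality, hA.lift_snd_assoc,
      hE.lift_snd_assoc, (hW c).w]
  · exact fun s => (hW a).hom_ext (by simp [w₁.naturality]) (by simp [w₂.naturality])
  · exact fun s => (hW c).hom_ext (by simp [w₁.naturality]) (by simp [w₂.naturality])
  · intro s m hp hq
    refine (hW d).hom_ext (hA.hom_ext ?_ ?_) (hE.hom_ext ?_ ?_) <;>
      simp [← w₁.naturality, ← w₂.naturality, reassoc_of% hp, reassoc_of% hq,
        -NatTrans.naturality, -NatTrans.naturality_assoc]

end PointwisePullback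

section GapFib

variable {S : Clan C} {S' : Clan D}

theorem gapFib_iff {A B : ClanMorCat S S'} (α : A ⟶ B) :
    GapFib S S' α ↔ ∀ ⦃c c' : C⦄ (f : c ⟶ c'), S.Fib f →
      S'.IsGapFib (A.obj.map f) (α.hom.app c) (α.hom.app c') (B.obj.map f) :=
  Iff.rfl

theorem GapFib.fib_app {A B : ClanMorCat S S'} {α : A ⟶ B} (hα : GapFib S S' α) (c : C) :
    S'.Fib (α.hom.app c) := by
  obtain ⟨hA⟩ := A.property.2.1
  obtain ⟨hB⟩ := B.property.2.1
  have := isIso_of_isTerminal hA hB (α.hom.app S.T)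
  exact ((gapFib_iff α).1 hα _ (S.fib_toT (S.isTerminalT.from c))).fib_left
    (α.hom.naturality _) (S'.fib_of_isIso _)

theorem GapFib.comp {A B E : ClanMorCat S S'} {α : A ⟶ B} {β : B ⟶ E} (hα : GapFib S S' α)
    (hβ : GapFib S S' β) : GapFib S S' (α ≫ β) :=
  fun _ _ f hf => ((gapFib_iff α).1 hα f hf).comp (hβ f hf) (α.hom.naturality f)
    (β.hom.naturality f) (B.property.1 f hf) (E.property.1 f hf)

theorem gapFib_of_isIso {A B : ClanMorCat S S'} (α : A ⟶ B) [IsIso α] : GapFib S S' α :=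
  fun _ _ _ _ => Clan.isGapFib_of_isIso

theorem GapFib.of_arrow_iso {A B A' B' : ClanMorCat S S'} {α : A ⟶ B} {α' : A' ⟶ B'}
    (e : Arrow.mk α ≅ Arrow.mk α') (hα : GapFib S S' α) : GapFib S S' α' := by
  rw [Arrow.iso_w' e]
  exact (gapFib_of_isIso e.inv.left).comp (hα.comp (gapFib_of_isIso e.hom.right))

end GapFib

namespace ClanMorCat

section Terminal

variable (S : Clan C) (S' : Clan D)

theorem isClanMor_const_terminal : IsClanMor S S' ((Functor.const C).obj S'.T) :=
  ⟨fun _ _ _ _ => S'.fib_of_isIso (𝟙 _), ⟨S'.isTerminalT⟩,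
    fun _ _ _ _ _ _ _ _ _ _ => IsPullback.id_vert (𝟙 _)⟩

def terminal : ClanMorCat S S' := ⟨_, isClanMor_const_terminal S S'⟩

def terminalIsTerminal : IsTerminal (terminal S S') :=
  IsTerminal.ofUniqueHom
    (fun _ => ObjectProperty.homMk
      { app _ := S'.isTerminalT.from _
        naturality _ _ _ := S'.isTerminalT.hom_ext _ _ })
    (fun _ _ => InducedCategory.hom_ext (NatTrans.ext (funext fun _ => S'.isTerminalT.hom_ext _ _)))

variable {S S'}

theorem gapFib_to_terminal {A : ClanMorCat S S'} (τ : A ⟶ terminal S S') : GapFib S S' τ :=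
  fun _ _ f hf =>
    have : IsIso ((terminal S S').obj.map f) := inferInstanceAs (IsIso (𝟙 _))
    Clan.isGapFib_of_isIso_bottom (A.property.1 f hf)

end Terminal

section Pullback

variable {S : Clan C} {S' : Clan D} {A B E : ClanMorCat S S'} (γ : A ⟶ B) {β : E ⟶ B}
  (hβ : GapFib S S' β)

noncomputable def pullbackCone : PullbackCone γ.hom β.hom :=
  PullbackCone.combine γ.hom β.hom
    (fun c =>
      have := S'.hasPullback (γ.hom.app c) (hβ.fib_app c)
      (IsPullback.of_hasPullback _ _).cone)
    (fun c =>
      have := S'.hasPullback (γ.hom.app c) (hβ.fib_app c)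
      (IsPullback.of_hasPullback _ _).isLimit)

theorem isPullback_pullbackCone_app (c : C) :
    IsPullback ((pullbackCone γ hβ).fst.app c) ((pullbackCone γ hβ).snd.app c) (γ.hom.app c)
      (β.hom.app c) :=
  have := S'.hasPullback (γ.hom.app c) (hβ.fib_app c)
  IsPullback.of_hasPullback _ _

theorem isGapFib_pullbackCone_fst {c c' : C} (f : c ⟶ c') (hf : S.Fib f) :
    S'.IsGapFib ((pullbackCone γ hβ).pt.map f) ((pullbackCone γ hβ).fst.app c)
      ((pullbackCone γ hβ).fst.app c') (A.obj.map f) :=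
  ((gapFib_iff β).1 hβ f hf).baseChange (B.property.1 f hf) (isPullback_pullbackCone_app γ hβ c)
    (isPullback_pullbackCone_app γ hβ c') (γ.hom.naturality f) (β.hom.naturality f)
    ((pullbackCone γ hβ).snd.naturality f)

theorem isClanMor_pullbackCone_pt : IsClanMor S S' (pullbackCone γ hβ).pt := by
  refine ⟨fun c c' f hf => ?_, ?_, fun d a b c p q g f hpq hf => ?_⟩
  · exact (isGapFib_pullbackCone_fst γ hβ f hf).fib_top ((pullbackCone γ hβ).fst.naturality f)
      (A.property.1 f hf)
  · obtain ⟨hA⟩ := A.property.2.1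
    obtain ⟨hB⟩ := B.property.2.1
    obtain ⟨hE⟩ := E.property.2.1
    have := isIso_of_isTerminal hA hB (γ.hom.app S.T)
    have := (isPullback_pullbackCone_app γ hβ S.T).isIso_snd_of_isIso
    exact ⟨hE.ofIso (asIso ((pullbackCone γ hβ).snd.app S.T)).symm⟩
  · exact isPullback_map_of_isPullback_app (isPullback_pullbackCone_app γ hβ) hpq.w
      (A.property.2.2 p q g f hpq hf) (B.property.2.2 p q g f hpq hf)
      (E.property.2.2 p q g f hpq hf)

noncomputable def pullback : ClanMorCat S S' :=
  ⟨(pullbackCone γ hβ).pt, isClanMor_pullbackCone_pt γ hβ⟩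

noncomputable def pullbackFst : pullback γ hβ ⟶ A :=
  ObjectProperty.homMk (pullbackCone γ hβ).fst

noncomputable def pullbackSnd : pullback γ hβ ⟶ E :=
  ObjectProperty.homMk (pullbackCone γ hβ).snd

theorem isPullback_pullbackFst_pullbackSnd :
    IsPullback (pullbackFst γ hβ) (pullbackSnd γ hβ) γ β :=
  .of_map_of_faithful (ObjectProperty.ι _)
    (IsPullback.of_isLimit (PullbackCone.combineIsLimit _ _ _ _))

theorem gapFib_pullbackFst : GapFib S S' (pullbackFst γ hβ) :=
  fun _ _ f hf => isGapFib_pullbackCone_fst γ hβ f hf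

theorem gapFib_of_isPullback (hβ : GapFib S S' β) {P : ClanMorCat S S'} {p : P ⟶ A}
    {q : P ⟶ E} (h : IsPullback p q γ β) : GapFib S S' p :=
  (gapFib_pullbackFst γ hβ).of_arrow_iso
    (Arrow.isoMk ((isPullback_pullbackFst_pullbackSnd γ hβ).isoIsPullback _ _ h) (Iso.refl _)
      ((IsPullback.isoIsPullback_hom_fst _ _ _ h).trans (Category.comp_id _).symm))

end Pullback

noncomputable def clan (S : Clan C) (S' : Clan D) : Clan (ClanMorCat S S') where
  Fib {_ _} α := GapFib S S' α
  T := terminal S S'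
  isTerminalT := terminalIsTerminal S S'
  fib_toT {_} := gapFib_to_terminal
  fib_iso {_ _ _ _} _ _ e hα := hα.of_arrow_iso e
  fib_comp {_ _ _} _ _ hα hβ := hα.comp hβ
  fib_pb_exists {_ _ _} γ _ hβ :=
    ⟨_, _, _, isPullback_pullbackFst_pullbackSnd γ hβ, gapFib_pullbackFst γ hβ⟩
  fib_pb_stable {_ _ _ _} _ _ γ _ h hβ := gapFib_of_isPullback γ hβ h

end ClanMorCat

/-- For clans `C` and `D`, the category of clan morphisms `C ⊸ D` (with
natural transformations as morphisms and limits computed pointwise) is itself a clan, in which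
`α : F ⟶ G` is a fibration iff for every fibration `c ↠ c'` in `C` the gap map
`F(c) ⟶ F(c') ×_{G(c')} G(c)` is a fibration in `D`; moreover every fibration in `C ⊸ D` is a
pointwise fibration. -/
theorem clan_hom_is_clan (S : Clan C) (S' : Clan D) :
    ∃ SF : Clan (ClanMorCat S S'),
      (∀ (A B : ClanMorCat S S') (α : A ⟶ B), SF.Fib α ↔ GapFib S S' α) ∧
      (∀ (A B : ClanMorCat S S') (α : A ⟶ B), SF.Fib α →
        ∀ c : C, S'.Fib (α.hom.app c)) :=
  ⟨ClanMorCat.clan S S', fun _ _ _ => Iff.rfl, fun _ _ _ hα => hα.fib_app⟩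
end
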